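/- Let D be an effective divisor on a connected graph, q a vertex, and D_q the q-reduced divisor equivalent to D. If U is the (nonempty) set returned by Dhar's algorithm applied to D and q, and D' = D - Q·1_U, then dist(D', D_q) = dist(D, D_q) - 1. -/
import Mathlib


open Finset

namespace Gonality

variable {V : Type*}

/-- Laplacian matrix of a multigraph given by edge multiplicities `E`. -/
def lap [Fintype V] [DecidableEq V] (E : V → V → ℕ) : Matrix V V ℤ :=
  Matrix.of fun u v => if u = v then (∑ w, (E u w : ℤ)) else -(E u v : ℤ)

/-- Connectivity of the multigraph with edge multiplicities `E`. -/
def MGConnected (E : V → V → ℕ) : Prop :=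
  ∀ u v : V, Relation.ReflTransGen (fun a b => 0 < E a b) u v

/-- Indicator vector of a set of vertices. -/
def ind [DecidableEq V] (U : Finset V) : V → ℤ := fun v => if v ∈ U then 1 else 0

/-- Number of edges from `v` to the complement of `U`. -/
def outdeg [Fintype V] [DecidableEq V] (E : V → V → ℕ) (U : Finset V) (v : V) : ℤ :=
  ∑ u ∈ Uᶜ, (E v u : ℤ)

/-- `U` can be fired from the divisor `D`. -/
def Fireable [Fintype V] [DecidableEq V] (E : V → V → ℕ) (D : V → ℤ) (U : Finset V) : Prop :=
  ∀ v ∈ U, outdeg E U v ≤ D v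

/-- Maximum entry of an integer vector. -/
def vmax [Fintype V] [Nonempty V] (x : V → ℤ) : ℤ :=
  Finset.univ.sup' Finset.univ_nonempty x


lemma lap_mulVec [Fintype V] [DecidableEq V] (E : V → V → ℕ) (hloop : ∀ v, E v v = 0)
    (z : V → ℤ) (v : V) :
    (lap E).mulVec z v = ∑ u, (E v u : ℤ) * (z v - z u) := by
  have h : ∀ u, ((if v = u then (∑ w, (E v w : ℤ)) else -(E v u : ℤ))) * z u
      = (if v = u then (∑ w, (E v w : ℤ)) * z u else 0) - (E v u : ℤ) * z u := by
    intro u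
    by_cases h : v = u
    · subst h; simp [hloop v]
    · simp [h]
  simp only [Matrix.mulVec, dotProduct, lap, Matrix.of_apply]
  rw [Finset.sum_congr rfl fun u _ => h u, Finset.sum_sub_distrib,
    Finset.sum_ite_eq]
  simp [mul_sub, Finset.sum_sub_distrib, Finset.sum_mul]

lemma fire_nonneg [Fintype V] [DecidableEq V] (E : V → V → ℕ) (hloop : ∀ v, E v v = 0)
    (D : V → ℤ) (hD : 0 ≤ D) (W : Finset V) (hW : Fireable E D W) :
    0 ≤ D - (lap E).mulVec (ind W) := by
  intro v
  simp only [Pi.zero_apply, Pi.sub_apply, lap_mulVec E hloop]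
  by_cases hv : v ∈ W
  · have key : ∑ u, (E v u : ℤ) * (ind W v - ind W u) = outdeg E W v := by
      rw [← Finset.sum_add_sum_compl W, outdeg]
      have h1 : ∑ u ∈ W, (E v u : ℤ) * (ind W v - ind W u) = 0 := by
        apply Finset.sum_eq_zero; intro u hu; simp [ind, hv, hu]
      have h2 : ∑ u ∈ Wᶜ, (E v u : ℤ) * (ind W v - ind W u) = ∑ u ∈ Wᶜ, (E v u : ℤ) := by
        apply Finset.sum_congr rfl; intro u hu
        rw [Finset.mem_compl] at hu; simp [ind, hv, hu]
      rw [h1, h2, zero_add]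
    rw [key]
    have := hW v hv
    linarith
  · have key : ∑ u, (E v u : ℤ) * (ind W v - ind W u) ≤ 0 := by
      apply Finset.sum_nonpos
      intro u _
      have h2 : ind W v - ind W u ≤ 0 := by
        simp only [ind, if_neg hv]
        by_cases hu : u ∈ W <;> simp [hu]
      exact mul_nonpos_of_nonneg_of_nonpos (by positivity) h2
    have := hD v
    simp only [Pi.zero_apply] at this
    linarith

lemma const_of_lap_ker [Fintype V] [DecidableEq V] (E : V → V → ℕ)
    (hloop : ∀ v, E v v = 0) (hconn : MGConnected E)
    (z : V → ℤ) (hz : (lap E).mulVec z = 0)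
    (v0 : V) (hmax : ∀ u, z u ≤ z v0) : ∀ v, z v = z v0 := by
  have step : ∀ a b, z a = z v0 → 0 < E a b → z b = z v0 := by
    intro a b ha hab
    have h0 : (lap E).mulVec z a = 0 := congrFun hz a
    rw [lap_mulVec E hloop] at h0
    have hnn : ∀ u ∈ Finset.univ, (0:ℤ) ≤ (E a u : ℤ) * (z a - z u) := by
      intro u _
      apply mul_nonneg (by positivity)
      have := hmax u
      rw [ha] at *
      linarith
    have := (Finset.sum_eq_zero_iff_of_nonneg hnn).mp h0 b (Finset.mem_univ b)
    have hEab : (0:ℤ) < (E a b : ℤ) := by exact_mod_cast hab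
    have : z a - z b = 0 := by
      rcases mul_eq_zero.mp this with h | h
      · exact absurd h (ne_of_gt hEab)
      · exact h
    linarith [ha]
  intro v
  have h := hconn v0 v
  induction h with
  | refl => rfl
  | tail _ hbc ih => exact step _ _ ih hbc

lemma sum_le_weighted [Fintype V] [DecidableEq V] (E : V → V → ℕ) (x : V → ℤ)
    (hx0 : 0 ≤ x) (T : Finset V) (hT : ∀ u ∈ T, 1 ≤ x u) (v : V) :
    ∑ u ∈ T, (E v u : ℤ) ≤ ∑ u, (E v u : ℤ) * x u := by
  calc ∑ u ∈ T, (E v u : ℤ) ≤ ∑ u ∈ T, (E v u : ℤ) * x u := by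
        apply Finset.sum_le_sum
        intro u hu
        nlinarith [hT u hu, Nat.cast_nonneg (α := ℤ) (E v u)]
    _ ≤ ∑ u, (E v u : ℤ) * x u := by
        apply Finset.sum_le_sum_of_subset_of_nonneg (Finset.subset_univ T)
        intro u _ _
        exact mul_nonneg (by positivity) (hx0 u)

/-- firing the set returned by Dhar's algorithm decreases the
distance to the `q`-reduced divisor by exactly one. -/
theorem dist_decrease [Fintype V] [DecidableEq V] [Nonempty V]
    (E : V → V → ℕ) (hsym : ∀ u v, E u v = E v u) (hloop : ∀ v, E v v = 0)
    (hconn : MGConnected E)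
    (D Dq : V → ℤ) (hD : 0 ≤ D) (hDq : 0 ≤ Dq) (q : V)
    -- `Dq` is `q`-reduced:
    (hred : ∀ U : Finset V, U.Nonempty → q ∉ U → ¬ 0 ≤ Dq - (lap E).mulVec (ind U))
    -- `U` is the output of Dhar's algorithm on `(D, q)`: the maximal fireable set
    (U : Finset V) (hUq : q ∉ U) (hUfire : Fireable E D U)
    (hUmax : ∀ W : Finset V, q ∉ W → Fireable E D W → W ⊆ U)
    (hUne : U.Nonempty)
    (D' : V → ℤ) (hD' : D' = D - (lap E).mulVec (ind U))
    -- `x = script(D, Dq)` and `x' = script(D', Dq)`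
    (x x' : V → ℤ)
    (hx : Dq = D - (lap E).mulVec x) (hx0 : 0 ≤ x) (hxz : ∃ v, x v = 0)
    (hx' : Dq = D' - (lap E).mulVec x') (hx'0 : 0 ≤ x') (hx'z : ∃ v, x' v = 0) :
    vmax x' = vmax x - 1 := by
  set m := vmax x with hm
  have hxle : ∀ v, x v ≤ m := fun v => Finset.le_sup' x (Finset.mem_univ v)
  have contra : ∀ W : Finset V, W.Nonempty → q ∉ W → Fireable E Dq W → False :=
    fun W h1 h2 h3 => hred W h1 h2 (fire_nonneg E hloop Dq hDq W h3)
  -- Dq pointwise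
  have hDqv : ∀ v, Dq v = D v - ∑ u, (E v u : ℤ) * (x v - x u) := by
    intro v
    rw [hx]
    simp [lap_mulVec E hloop]
  -- Step 1 : x q = 0
  have hxq : x q = 0 := by
    by_contra hq0
    have hq1 : 1 ≤ x q := lt_of_le_of_ne (hx0 q) (Ne.symm hq0)
    set Z := Finset.univ.filter (fun v => x v = 0) with hZ
    obtain ⟨w, hw⟩ := hxz
    refine contra Z ⟨w, by simp [hZ, hw]⟩ (by simp [hZ, hq0]) ?_
    intro v hv
    rw [hZ, Finset.mem_filter] at hv
    have h1 : Dq v = D v + ∑ u, (E v u : ℤ) * x u := by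
      rw [hDqv v, hv.2]
      rw [sub_eq_add_neg, ← Finset.sum_neg_distrib]
      congr 1
      apply Finset.sum_congr rfl
      intro u _
      ring
    have h2 : outdeg E Z v ≤ ∑ u, (E v u : ℤ) * x u := by
      apply sum_le_weighted E x hx0
      intro u hu
      rw [Finset.mem_compl, hZ, Finset.mem_filter] at hu
      push_neg at hu
      have := hu (Finset.mem_univ u)
      exact lt_of_le_of_ne (hx0 u) (Ne.symm this)
    have := hD v
    simp only [Pi.zero_apply] at this
    rw [h1]
    linarith
  -- Step 2 : 1 ≤ m
  have hm1 : 1 ≤ m := by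
    by_contra hm0
    push_neg at hm0
    have hx_zero : ∀ v, x v = 0 := fun v => le_antisymm (by linarith [hxle v]) (hx0 v)
    refine contra U hUne hUq ?_
    intro v hv
    have := hUfire v hv
    rw [hDqv v]
    have : ∑ u, (E v u : ℤ) * (x v - x u) = 0 := by
      apply Finset.sum_eq_zero
      intro u _
      rw [hx_zero v, hx_zero u]
      ring
    rw [this]
    linarith [hUfire v hv]
  -- Step 3 : top level set S ⊆ U
  set S := Finset.univ.filter (fun v => x v = m) with hS
  obtain ⟨v1, _, hv1⟩ := Finset.exists_mem_eq_sup' (Finset.univ_nonempty (α := V)) x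
  have hv1m : x v1 = m := by rw [hm]; exact hv1.symm
  have hSne : S.Nonempty := ⟨v1, by simp [hS, hv1m]⟩
  have hqS : q ∉ S := by simp [hS, hxq]; linarith
  have hSfire : Fireable E D S := by
    intro v hv
    rw [hS, Finset.mem_filter] at hv
    have h2 : outdeg E S v ≤ ∑ u, (E v u : ℤ) * (x v - x u) := by
      calc outdeg E S v ≤ ∑ u ∈ Sᶜ, (E v u : ℤ) * (x v - x u) := by
            apply Finset.sum_le_sum
            intro u hu
            rw [Finset.mem_compl, hS, Finset.mem_filter] at hu
            push_neg at hu
            have h3 : x u ≤ m - 1 := by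
              have := hu (Finset.mem_univ u)
              have := hxle u
              omega
            nlinarith [Nat.cast_nonneg (α := ℤ) (E v u), hv.2]
        _ ≤ ∑ u, (E v u : ℤ) * (x v - x u) := by
            apply Finset.sum_le_sum_of_subset_of_nonneg (Finset.subset_univ _)
            intro u _ _
            rw [hv.2]
            exact mul_nonneg (by positivity) (by linarith [hxle u])
    have := hDq v
    simp only [Pi.zero_apply] at this
    have := hDqv v
    linarith
  have hSU : S ⊆ U := hUmax S hqS hSfire
  -- Step 4 : x ≥ 1 on U
  have hU1 : ∀ v ∈ U, 1 ≤ x v := by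
    by_contra hc
    push_neg at hc
    obtain ⟨w, hwU, hw⟩ := hc
    have hw0 : x w = 0 := le_antisymm (by linarith) (hx0 w)
    set A := U.filter (fun v => x v = 0) with hA
    refine contra A ⟨w, by simp [hA, hwU, hw0]⟩ (by simp [hA, hUq]) ?_
    intro v hv
    rw [hA, Finset.mem_filter] at hv
    have h1 : Dq v = D v + ∑ u, (E v u : ℤ) * x u := by
      rw [hDqv v, hv.2]
      rw [sub_eq_add_neg, ← Finset.sum_neg_distrib]
      congr 1
      apply Finset.sum_congr rfl
      intro u _
      ring
    have hsplit : Aᶜ = Uᶜ ∪ (U \ A) := by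
      ext u
      simp only [Finset.mem_compl, Finset.mem_union, Finset.mem_sdiff, hA, Finset.mem_filter]
      tauto
    have hdisj : Disjoint (Uᶜ) (U \ A) := by
      rw [Finset.disjoint_left]
      intro a ha hb
      rw [Finset.mem_compl] at ha
      exact ha (Finset.mem_sdiff.mp hb).1
    have h2 : outdeg E A v = outdeg E U v + ∑ u ∈ U \ A, (E v u : ℤ) := by
      rw [outdeg, outdeg, hsplit, Finset.sum_union hdisj]
    have h3 : ∑ u ∈ U \ A, (E v u : ℤ) ≤ ∑ u, (E v u : ℤ) * x u := by
      apply sum_le_weighted E x hx0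
      intro u hu
      rw [Finset.mem_sdiff, hA, Finset.mem_filter] at hu
      have : x u ≠ 0 := fun h => hu.2 ⟨hu.1, h⟩
      exact lt_of_le_of_ne (hx0 u) (Ne.symm this)
    have h4 := hUfire v hv.1
    rw [h1, h2]
    linarith
  -- Step 5 : x' = x - ind U
  have hkey : (lap E).mulVec (x - ind U - x') = 0 := by
    rw [Matrix.mulVec_sub, Matrix.mulVec_sub]
    have h1 : D - (lap E).mulVec x = (D - (lap E).mulVec (ind U)) - (lap E).mulVec x' := by
      rw [← hD', ← hx, ← hx']
    funext v
    have := congrFun h1 v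
    simp only [Pi.sub_apply, Pi.zero_apply] at this ⊢
    linarith
  obtain ⟨v0, -, hv0⟩ := Finset.exists_max_image Finset.univ (x - ind U - x')
    (Finset.univ_nonempty (α := V))
  have hconst := const_of_lap_ker E hloop hconn (x - ind U - x') hkey v0
    (fun u => hv0 u (Finset.mem_univ u))
  set c := (x - ind U - x') v0 with hc
  have hzv : ∀ v, x v - ind U v - x' v = c := by
    intro v
    have := hconst v
    simpa using this
  have hcle : c ≤ 0 := by
    have h := hzv q
    have hiq : ind U q = 0 := by simp [ind, hUq]
    have h2 := hx'0 q
    simp only [Pi.zero_apply] at h2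
    rw [hxq, hiq] at h
    linarith
  have hcge : 0 ≤ c := by
    obtain ⟨w, hw⟩ := hx'z
    have h1 := hzv w
    rw [hw] at h1
    by_cases hwU : w ∈ U
    · have := hU1 w hwU
      have hiw : ind U w = 1 := by simp [ind, hwU]
      rw [hiw] at h1
      linarith
    · have hiw : ind U w = 0 := by simp [ind, hwU]
      rw [hiw] at h1
      have h2 := hx0 w
      simp only [Pi.zero_apply] at h2
      linarith
  have hc0 : c = 0 := le_antisymm hcle hcge
  have hx'eq : ∀ v, x' v = x v - ind U v := by
    intro v
    have := hzv v
    rw [hc0] at this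
    linarith
  -- Step 6
  apply le_antisymm
  · apply Finset.sup'_le
    intro v _
    rw [hx'eq v]
    by_cases hvm : x v = m
    · have hvU : v ∈ U := hSU (by simp [hS, hvm])
      simp [ind, hvU, hvm]
    · have h1 : x v ≤ m - 1 := by
        have := hxle v
        omega
      have : (0:ℤ) ≤ ind U v := by simp [ind]; split <;> norm_num
      linarith
  · have hv1U : v1 ∈ U := hSU (by simp [hS, hv1m])
    have : x' v1 = m - 1 := by
      rw [hx'eq v1, hv1m]
      simp [ind, hv1U]
    calc m - 1 = x' v1 := this.symm
      _ ≤ vmax x' := Finset.le_sup' x' (Finset.mem_univ v1)
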